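/- arXiv:1402.0243 — 6 statements merged into one kernel-verified Lean document; each statement's English description precedes it below -/
import Mathlib

section
/- Let ρ₁, ρ₂, v₁, v₂, C be strictly positive real numbers, and suppose (ρ₁/ρ₂)·(v₂/v₁) > 1. Set R* = √((ρ₁·v₂)/(ρ₂·v₁)) and N* = C/(ρ₁ + ρ₂·R*). Then the pair (N*, R*) is feasible (N*·ρ₁ + N*·R*·ρ₂ ≤ C, R* ≥ 1, N* > 0) and for every pair of real numbers (N, R) with N > 0, R ≥ 1 and N·ρ₁ + N·R·ρ₂ ≤ C, we have v₁/N* + v₂/(R*·N*) ≤ v₁/N + v₂/(R·N). -/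
/-!
A feasible pair has `N ≤ C / (ρ₁ + ρ₂ R)`, so its variance `(v₁ + v₂ / R) / N` is at least
`(v₁ + v₂ / R) (ρ₁ + ρ₂ R) / C`, with equality when the whole budget is spent. Since
`v₁ ρ₂ R*² = v₂ ρ₁`, this cost–variance product exceeds its value at `R*` by
`v₁ ρ₂ (R - R*)² / R ≥ 0`.
-/

section CostVarianceProduct

variable {v₁ v₂ ρ₁ ρ₂ : ℝ}

theorem variance_eq_of_saturated_budget (v₁ v₂ ρ₁ ρ₂ C R : ℝ) :
    v₁ / (C / (ρ₁ + ρ₂ * R)) + v₂ / (R * (C / (ρ₁ + ρ₂ * R)))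
      = (v₁ + v₂ / R) * (ρ₁ + ρ₂ * R) / C := by
  simp only [div_eq_mul_inv, mul_inv, inv_inv]
  ring

theorem cost_mul_variance_div_le_variance {C N R : ℝ} (hv₁ : 0 ≤ v₁) (hv₂ : 0 ≤ v₂)
    (hρ₁ : 0 < ρ₁) (hρ₂ : 0 ≤ ρ₂) (hN : 0 < N) (hR : 0 < R)
    (hbudget : N * ρ₁ + N * R * ρ₂ ≤ C) :
    (v₁ + v₂ / R) * (ρ₁ + ρ₂ * R) / C ≤ v₁ / N + v₂ / (R * N) := by
  have hcost : 0 < ρ₁ + ρ₂ * R := by positivity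
  calc (v₁ + v₂ / R) * (ρ₁ + ρ₂ * R) / C
      ≤ (v₁ + v₂ / R) * (ρ₁ + ρ₂ * R) / (N * (ρ₁ + ρ₂ * R)) := by gcongr; linarith
    _ = v₁ / N + v₂ / (R * N) := by field_simp

theorem cost_mul_variance_sub_eq {R S : ℝ} (hR : R ≠ 0) (hS : S ≠ 0)
    (hS_sq : v₁ * ρ₂ * S ^ 2 = v₂ * ρ₁) :
    (v₁ + v₂ / R) * (ρ₁ + ρ₂ * R) - (v₁ + v₂ / S) * (ρ₁ + ρ₂ * S)
      = v₁ * ρ₂ * (R - S) ^ 2 / R := by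
  field_simp
  linear_combination (R - S) * hS_sq

theorem cost_mul_variance_le_of_sq_eq {R S : ℝ} (hv₁ : 0 ≤ v₁) (hρ₂ : 0 ≤ ρ₂) (hR : 0 < R)
    (hS : 0 < S) (hS_sq : v₁ * ρ₂ * S ^ 2 = v₂ * ρ₁) :
    (v₁ + v₂ / S) * (ρ₁ + ρ₂ * S) ≤ (v₁ + v₂ / R) * (ρ₁ + ρ₂ * R) := by
  have hgap : 0 ≤ v₁ * ρ₂ * (R - S) ^ 2 / R := by positivity
  linarith [cost_mul_variance_sub_eq hR.ne' hS.ne' hS_sq]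

end CostVarianceProduct

/-- **Proposition 2, first case.** If `(ρ₁/ρ₂)·(v₂/v₁) > 1`, then
`R* = √((ρ₁·v₂)/(ρ₂·v₁))`, `N* = C/(ρ₁ + ρ₂·R*)` is feasible and minimizes the
variance `v₁/N + v₂/(R·N)` subject to the budget constraint. -/
theorem prop2_case1 (ρ₁ ρ₂ v₁ v₂ C Rstar Nstar : ℝ)
    (hρ₁ : 0 < ρ₁) (hρ₂ : 0 < ρ₂) (hv₁ : 0 < v₁) (hv₂ : 0 < v₂) (hC : 0 < C)
    (hcond : 1 < ρ₁ / ρ₂ * (v₂ / v₁))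
    (hRstar : Rstar = Real.sqrt (ρ₁ * v₂ / (ρ₂ * v₁)))
    (hNstar : Nstar = C / (ρ₁ + ρ₂ * Rstar)) :
    (Nstar * ρ₁ + Nstar * Rstar * ρ₂ ≤ C ∧ 1 ≤ Rstar ∧ 0 < Nstar) ∧
    ∀ N R : ℝ, 0 < N → 1 ≤ R → N * ρ₁ + N * R * ρ₂ ≤ C →
      v₁ / Nstar + v₂ / (Rstar * Nstar) ≤ v₁ / N + v₂ / (R * N) := by
  rw [← mul_div_mul_comm] at hcond
  have hRstar_gt : 1 < Rstar := by
    rw [hRstar, Real.lt_sqrt zero_le_one, one_pow]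
    exact hcond
  have hRstar_sq : v₁ * ρ₂ * Rstar ^ 2 = v₂ * ρ₁ := by
    rw [hRstar, Real.sq_sqrt (by positivity)]
    field_simp
  have hNstar_pos : 0 < Nstar := by rw [hNstar]; positivity
  have hbudget : Nstar * ρ₁ + Nstar * Rstar * ρ₂ = C := by
    rw [hNstar]
    field_simp
  refine ⟨⟨hbudget.le, hRstar_gt.le, hNstar_pos⟩, fun N R hN hR hbudgetNR => ?_⟩
  calc v₁ / Nstar + v₂ / (Rstar * Nstar)
      = (v₁ + v₂ / Rstar) * (ρ₁ + ρ₂ * Rstar) / C := by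
        rw [hNstar, variance_eq_of_saturated_budget]
    _ ≤ (v₁ + v₂ / R) * (ρ₁ + ρ₂ * R) / C := by
        gcongr ?_ / C
        exact cost_mul_variance_le_of_sq_eq hv₁.le hρ₂.le (by linarith) (by linarith) hRstar_sq
    _ ≤ v₁ / N + v₂ / (R * N) :=
        cost_mul_variance_div_le_variance hv₁.le hv₂.le hρ₁ hρ₂.le hN (by linarith) hbudgetNR
end

section
/- Let ρ₁, ρ₂, v₁, v₂, C be strictly positive real numbers, and suppose (ρ₁/ρ₂)·(v₂/v₁) ≤ 1. Set N* = C/(ρ₁ + ρ₂). Then for every pair of real numbers (N, R) with N > 0, R ≥ 1 and N·ρ₁ + N·R·ρ₂ ≤ C, we have v₁/N* + v₂/N* ≤ v₁/N + v₂/(R·N); i.e., the constrained minimum is attained at R = 1, N = N*. -/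
/-!
Spending the whole budget, `1/N ≥ (ρ₁ + Rρ₂)/C`, so the variance at `(N, R)` is at least
`(v₁ + v₂/R)(ρ₁ + Rρ₂)/C`. Expanding, this product exceeds its value at `R = 1` by
`(R - 1)(ρ₂v₁ - ρ₁v₂/R)`, which is nonnegative because `ρ₁v₂ ≤ ρ₂v₁` and `R ≥ 1`.
-/

lemma mul_div_le_div_of_mul_le {a c C N : ℝ} (ha : 0 ≤ a) (hN : 0 < N) (hC : 0 < C)
    (hbudget : N * c ≤ C) : a * c / C ≤ a / N := by
  rw [mul_div_assoc, div_eq_mul_one_div a N]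
  refine mul_le_mul_of_nonneg_left ?_ ha
  rwa [div_le_div_iff₀ hC hN, one_mul, mul_comm]

lemma mul_add_le_mul_add_of_one_le {ρ₁ ρ₂ v₁ v₂ R : ℝ} (hρ₁ : 0 ≤ ρ₁) (hv₂ : 0 ≤ v₂)
    (hcond : ρ₁ * v₂ ≤ ρ₂ * v₁) (hR : 1 ≤ R) :
    (v₁ + v₂) * (ρ₁ + ρ₂) ≤ (v₁ + v₂ / R) * (ρ₁ + R * ρ₂) := by
  have hR₀ : 0 < R := zero_lt_one.trans_le hR
  have hdecay : ρ₁ * v₂ / R ≤ ρ₂ * v₁ :=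
    (div_le_self (mul_nonneg hρ₁ hv₂) hR).trans hcond
  have hexpand : (v₁ + v₂ / R) * (ρ₁ + R * ρ₂) - (v₁ + v₂) * (ρ₁ + ρ₂)
      = (R - 1) * (ρ₂ * v₁ - ρ₁ * v₂ / R) := by
    field_simp
    ring
  linarith [mul_nonneg (sub_nonneg.2 hR) (sub_nonneg.2 hdecay)]

/-- **Proposition 2, second case.** If `(ρ₁/ρ₂)·(v₂/v₁) ≤ 1`, then the
budget-constrained minimum of `v₁/N + v₂/(R·N)` is attained at `R = 1`,
`N* = C/(ρ₁ + ρ₂)`. -/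
theorem prop2_case2 (ρ₁ ρ₂ v₁ v₂ C Nstar : ℝ)
    (hρ₁ : 0 < ρ₁) (hρ₂ : 0 < ρ₂) (hv₁ : 0 < v₁) (hv₂ : 0 < v₂) (hC : 0 < C)
    (hcond : ρ₁ / ρ₂ * (v₂ / v₁) ≤ 1)
    (hNstar : Nstar = C / (ρ₁ + ρ₂)) :
    ∀ N R : ℝ, 0 < N → 1 ≤ R → N * ρ₁ + N * R * ρ₂ ≤ C →
      v₁ / Nstar + v₂ / Nstar ≤ v₁ / N + v₂ / (R * N) := by
  intro N R hN hR hbudget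
  have hcond' : ρ₁ * v₂ ≤ ρ₂ * v₁ := by
    rwa [div_mul_div_comm, div_le_one (by positivity)] at hcond
  have hoptimum : v₁ / Nstar + v₂ / Nstar = (v₁ + v₂) * (ρ₁ + ρ₂) / C := by
    rw [← add_div, hNstar, div_div_eq_mul_div]
  have hvariance : v₁ / N + v₂ / (R * N) = (v₁ + v₂ / R) / N := by
    rw [add_div, div_div, mul_comm R]
  rw [hoptimum, hvariance]
  calc (v₁ + v₂) * (ρ₁ + ρ₂) / C ≤ (v₁ + v₂ / R) * (ρ₁ + R * ρ₂) / C := by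
        gcongr ?_ / C
        exact mul_add_le_mul_add_of_one_le hρ₁.le hv₂.le hcond' hR
    _ ≤ (v₁ + v₂ / R) / N :=
        mul_div_le_div_of_mul_le (by positivity) hN hC (by linarith)
end

section
/- Let ρ₁, ρ₂, v₁, v₂ be strictly positive real numbers with (ρ₁/ρ₂)·(v₂/v₁) > 1. Define V(R) = (ρ₁ + ρ₂·R)·(v₁ + v₂/R) for R > 0 and R* = √((ρ₁·v₂)/(ρ₂·v₁)). Then V(R*)/V(1) = (√(v₁/v₂) + √(ρ₂/ρ₁))² / ((1 + v₁/v₂)·(1 + ρ₂/ρ₁)). -/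
/-!
Writing `ρ₁, ρ₂, v₁, v₂` as squares of positive reals, every square root in the statement
becomes a rational function of those. At `R*` the two cross terms `ρ₁ v₂ / R` and `ρ₂ v₁ R` of
`V R` coincide, so `V R* = (√(ρ₁ v₁) + √(ρ₂ v₂))²`, while `V 1 = (ρ₁ + ρ₂)(v₁ + v₂)`; dividing
numerator and denominator of the quotient by `ρ₁ v₂` gives the stated form.
-/

open Real

noncomputable section

def costVariance (ρ₁ ρ₂ v₁ v₂ R : ℝ) : ℝ := (ρ₁ + ρ₂ * R) * (v₁ + v₂ / R)

def optimalSubsimulations (ρ₁ ρ₂ v₁ v₂ : ℝ) : ℝ := √(ρ₁ * v₂ / (ρ₂ * v₁))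

theorem exists_pos_sq_eq {x : ℝ} (hx : 0 < x) : ∃ a, 0 < a ∧ a ^ 2 = x :=
  ⟨√x, sqrt_pos.2 hx, sq_sqrt hx.le⟩

variable {ρ₁ ρ₂ v₁ v₂ : ℝ}

theorem optimalSubsimulations_pos (hρ₁ : 0 < ρ₁) (hρ₂ : 0 < ρ₂) (hv₁ : 0 < v₁) (hv₂ : 0 < v₂) :
    0 < optimalSubsimulations ρ₁ ρ₂ v₁ v₂ :=
  sqrt_pos.2 (by positivity)

theorem costVariance_one : costVariance ρ₁ ρ₂ v₁ v₂ 1 = (ρ₁ + ρ₂) * (v₁ + v₂) := by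
  simp [costVariance]

theorem costVariance_optimalSubsimulations (hρ₁ : 0 < ρ₁) (hρ₂ : 0 < ρ₂) (hv₁ : 0 < v₁)
    (hv₂ : 0 < v₂) :
    costVariance ρ₁ ρ₂ v₁ v₂ (optimalSubsimulations ρ₁ ρ₂ v₁ v₂)
      = (√(ρ₁ * v₁) + √(ρ₂ * v₂)) ^ 2 := by
  obtain ⟨a, ha, rfl⟩ := exists_pos_sq_eq hρ₁
  obtain ⟨b, hb, rfl⟩ := exists_pos_sq_eq hρ₂
  obtain ⟨c, hc, rfl⟩ := exists_pos_sq_eq hv₁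
  obtain ⟨d, hd, rfl⟩ := exists_pos_sq_eq hv₂
  simp (disch := positivity) only [costVariance, optimalSubsimulations, ← mul_pow, ← div_pow,
    sqrt_sq]
  field_simp

theorem sq_sqrt_mul_add_sqrt_mul_div (hρ₁ : 0 < ρ₁) (hρ₂ : 0 < ρ₂) (hv₁ : 0 < v₁)
    (hv₂ : 0 < v₂) :
    (√(ρ₁ * v₁) + √(ρ₂ * v₂)) ^ 2 / ((ρ₁ + ρ₂) * (v₁ + v₂))
      = (√(v₁ / v₂) + √(ρ₂ / ρ₁)) ^ 2 / ((1 + v₁ / v₂) * (1 + ρ₂ / ρ₁)) := by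
  obtain ⟨a, ha, rfl⟩ := exists_pos_sq_eq hρ₁
  obtain ⟨b, hb, rfl⟩ := exists_pos_sq_eq hρ₂
  obtain ⟨c, hc, rfl⟩ := exists_pos_sq_eq hv₁
  obtain ⟨d, hd, rfl⟩ := exists_pos_sq_eq hv₂
  simp (disch := positivity) only [← mul_pow, ← div_pow, sqrt_sq]
  field_simp
  ring

end

theorem prop3_gain_formula_general (ρ₁ ρ₂ v₁ v₂ : ℝ)
    (hρ₁ : 0 < ρ₁) (hρ₂ : 0 < ρ₂) (hv₁ : 0 < v₁) (hv₂ : 0 < v₂)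
    (V : ℝ → ℝ) (hV : ∀ R : ℝ, 0 < R → V R = (ρ₁ + ρ₂ * R) * (v₁ + v₂ / R))
    (Rstar : ℝ) (hRstar : Rstar = Real.sqrt (ρ₁ * v₂ / (ρ₂ * v₁))) :
    V Rstar / V 1
      = (Real.sqrt (v₁ / v₂) + Real.sqrt (ρ₂ / ρ₁)) ^ 2
        / ((1 + v₁ / v₂) * (1 + ρ₂ / ρ₁)) := by
  have hV' : ∀ R, 0 < R → V R = costVariance ρ₁ ρ₂ v₁ v₂ R := hV
  have hRstar' : Rstar = optimalSubsimulations ρ₁ ρ₂ v₁ v₂ := hRstar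
  rw [hRstar', hV' _ (optimalSubsimulations_pos hρ₁ hρ₂ hv₁ hv₂), hV' 1 one_pos,
    costVariance_optimalSubsimulations hρ₁ hρ₂ hv₁ hv₂, costVariance_one,
    sq_sqrt_mul_add_sqrt_mul_div hρ₁ hρ₂ hv₁ hv₂]

/-- **Proposition 3, formula for the relative gain** `γ* = V(R*)/V(1)`. -/
theorem prop3_gain_formula (ρ₁ ρ₂ v₁ v₂ : ℝ)
    (hρ₁ : 0 < ρ₁) (hρ₂ : 0 < ρ₂) (hv₁ : 0 < v₁) (hv₂ : 0 < v₂)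
    (hcond : 1 < ρ₁ / ρ₂ * (v₂ / v₁))
    (V : ℝ → ℝ) (hV : ∀ R : ℝ, 0 < R → V R = (ρ₁ + ρ₂ * R) * (v₁ + v₂ / R))
    (Rstar : ℝ) (hRstar : Rstar = Real.sqrt (ρ₁ * v₂ / (ρ₂ * v₁))) :
    V Rstar / V 1
      = (Real.sqrt (v₁ / v₂) + Real.sqrt (ρ₂ / ρ₁)) ^ 2
        / ((1 + v₁ / v₂) * (1 + ρ₂ / ρ₁)) :=
  prop3_gain_formula_general ρ₁ ρ₂ v₁ v₂ hρ₁ hρ₂ hv₁ hv₂ V hV Rstar hRstar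
end

section
/- Let ρ₁, ρ₂, v₁, v₂ be strictly positive real numbers. Define V(R) = (ρ₁ + ρ₂·R)·(v₁ + v₂/R) for R > 0 and R* = √((ρ₁·v₂)/(ρ₂·v₁)). Suppose R* > 1 and let α > 1 and R be real numbers with α⁻¹·R* ≤ R ≤ α·R*. Then V(R)/V(R*) ≤ 1/2 + (α + α⁻¹)/4, and consequently V(R)/V(1) ≤ (1/2 + (α + α⁻¹)/4)·(V(R*)/V(1)). -/
/-!
With `b = ρ₂ v₁` and `R*² = ρ₁ v₂ / (ρ₂ v₁)`, the variance splits as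
`V(R) = (ρ₁ v₁ + ρ₂ v₂) + b (R + R*²/R)`, so `V(R*) = (ρ₁ v₁ + ρ₂ v₂) + 2 b R*`.
On `[α⁻¹ R*, α R*]` the term `R + R*²/R` is at most `(α + α⁻¹) R*`, and AM-GM gives
`2 b R* ≤ ρ₁ v₁ + ρ₂ v₂`; these two facts give the bound `V(R) ≤ (1/2 + (α + α⁻¹)/4) V(R*)`.
-/

lemma two_le_add_inv_self {α : ℝ} (hα : 0 < α) : 2 ≤ α + α⁻¹ := by
  have h : α * α⁻¹ = 1 := mul_inv_cancel₀ hα.ne'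
  nlinarith [sq_nonneg (α - 1), inv_pos.2 hα]

lemma add_sq_div_le_of_mem_Icc {S α R : ℝ} (hS : 0 < S) (hα : 0 < α)
    (hlow : α⁻¹ * S ≤ R) (hhigh : R ≤ α * S) : R + S ^ 2 / R ≤ (α + α⁻¹) * S := by
  have hR : 0 < R := lt_of_lt_of_le (by positivity) hlow
  rw [← sub_nonneg]
  have key : R * ((α + α⁻¹) * S - (R + S ^ 2 / R)) = (α * S - R) * (R - α⁻¹ * S) := by
    field_simp
    ring
  exact nonneg_of_mul_nonneg_right (key ▸ mul_nonneg (sub_nonneg.2 hhigh) (sub_nonneg.2 hlow)) hR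

lemma cost_mul_variance_eq {ρ₁ ρ₂ v₁ v₂ S R : ℝ} (hS : ρ₂ * v₁ * S ^ 2 = ρ₁ * v₂) (hR : R ≠ 0) :
    (ρ₁ + ρ₂ * R) * (v₁ + v₂ / R) = (ρ₁ * v₁ + ρ₂ * v₂) + ρ₂ * v₁ * (R + S ^ 2 / R) := by
  field_simp
  linear_combination -hS

lemma two_mul_le_add_of_mul_sq_eq {ρ₁ ρ₂ v₁ v₂ S : ℝ} (hρ₂ : 0 ≤ ρ₂) (hv₂ : 0 < v₂)
    (hS : ρ₂ * v₁ * S ^ 2 = ρ₁ * v₂) : 2 * (ρ₂ * v₁) * S ≤ ρ₁ * v₁ + ρ₂ * v₂ := by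
  have key : v₂ * (ρ₁ * v₁ + ρ₂ * v₂ - 2 * (ρ₂ * v₁) * S) = ρ₂ * (v₁ * S - v₂) ^ 2 := by
    linear_combination -v₁ * hS
  rw [← sub_nonneg]
  exact nonneg_of_mul_nonneg_right (key ▸ by positivity) hv₂

lemma add_mul_le_mul_add_two_mul {b c S κ x : ℝ} (hb : 0 ≤ b) (hc : 2 * b * S ≤ c)
    (hκ : 2 ≤ κ) (hx : x ≤ κ * S) : c + b * x ≤ (1 / 2 + κ / 4) * (c + b * (2 * S)) := by
  nlinarith [mul_nonneg (sub_nonneg.2 hκ) (sub_nonneg.2 hc), mul_le_mul_of_nonneg_left hx hb]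

theorem prop4_robustness_general (ρ₁ ρ₂ v₁ v₂ : ℝ)
    (hρ₁ : 0 < ρ₁) (hρ₂ : 0 < ρ₂) (hv₁ : 0 < v₁) (hv₂ : 0 < v₂)
    (V : ℝ → ℝ) (hV : ∀ R : ℝ, 0 < R → V R = (ρ₁ + ρ₂ * R) * (v₁ + v₂ / R))
    (Rstar : ℝ) (hRstar : Rstar = Real.sqrt (ρ₁ * v₂ / (ρ₂ * v₁)))
    (α R : ℝ) (hα : 1 < α) (hlow : α⁻¹ * Rstar ≤ R) (hhigh : R ≤ α * Rstar) :
    V R / V Rstar ≤ 1 / 2 + (α + α⁻¹) / 4 ∧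
    V R / V 1 ≤ (1 / 2 + (α + α⁻¹) / 4) * (V Rstar / V 1) := by
  have hα0 : 0 < α := one_pos.trans hα
  have hS0 : 0 < Rstar := hRstar ▸ Real.sqrt_pos.2 (by positivity)
  have hR0 : 0 < R := lt_of_lt_of_le (by positivity) hlow
  have hsq : ρ₂ * v₁ * Rstar ^ 2 = ρ₁ * v₂ := by
    rw [hRstar, Real.sq_sqrt (by positivity)]
    field_simp
  have hVS : V Rstar = (ρ₁ * v₁ + ρ₂ * v₂) + ρ₂ * v₁ * (2 * Rstar) := by
    rw [hV Rstar hS0, cost_mul_variance_eq hsq hS0.ne', sq, mul_div_cancel_right₀ _ hS0.ne', two_mul]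
  have hmain : V R ≤ (1 / 2 + (α + α⁻¹) / 4) * V Rstar := by
    rw [hV R hR0, cost_mul_variance_eq hsq hR0.ne', hVS]
    exact add_mul_le_mul_add_two_mul (by positivity) (two_mul_le_add_of_mul_sq_eq hρ₂.le hv₂ hsq)
      (two_le_add_inv_self hα0) (add_sq_div_le_of_mem_Icc hS0 hα0 hlow hhigh)
  have hV1 : 0 < V 1 := by
    rw [hV 1 one_pos]
    positivity
  refine ⟨(div_le_iff₀ (by rw [hVS]; positivity)).2 hmain, ?_⟩
  rw [← mul_div_assoc]
  exact div_le_div_of_nonneg_right hmain hV1.le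

/-- **Proposition 4 (robustness to misspecification of R).** If
`α⁻¹·R* ≤ R ≤ α·R*`, then `V(R)/V(R*) ≤ 1/2 + (α + α⁻¹)/4`, and consequently
`V(R)/V(1) ≤ (1/2 + (α + α⁻¹)/4)·(V(R*)/V(1))`. -/
theorem prop4_robustness (ρ₁ ρ₂ v₁ v₂ : ℝ)
    (hρ₁ : 0 < ρ₁) (hρ₂ : 0 < ρ₂) (hv₁ : 0 < v₁) (hv₂ : 0 < v₂)
    (V : ℝ → ℝ) (hV : ∀ R : ℝ, 0 < R → V R = (ρ₁ + ρ₂ * R) * (v₁ + v₂ / R))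
    (Rstar : ℝ) (hRstar : Rstar = Real.sqrt (ρ₁ * v₂ / (ρ₂ * v₁)))
    (hRstar1 : 1 < Rstar)
    (α R : ℝ) (hα : 1 < α) (hlow : α⁻¹ * Rstar ≤ R) (hhigh : R ≤ α * Rstar) :
    V R / V Rstar ≤ 1 / 2 + (α + α⁻¹) / 4 ∧
    V R / V 1 ≤ (1 / 2 + (α + α⁻¹) / 4) * (V Rstar / V 1) :=
  prop4_robustness_general ρ₁ ρ₂ v₁ v₂ hρ₁ hρ₂ hv₁ hv₂ V hV Rstar hRstar α R hα hlow hhigh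
end

section
/- Let ρ₁, ρ₂, v₁, v₂ be strictly positive real numbers. Define V(R) = (ρ₁ + ρ₂·R)·(v₁ + v₂/R) for R > 0 and R* = √((ρ₁·v₂)/(ρ₂·v₁)), and suppose R* > 1. Then for every real R with 1 < R < (R*)², one has V(R) < V(1). -/
/-! `V(R) - V(1) = (R - 1) (ρ₂ v₁ - ρ₁ v₂ / R)`, and for `R > 0` the bound `R < (R*)² = ρ₁ v₂ / (ρ₂ v₁)`
says exactly that the second factor is negative. -/

noncomputable def nestedCostVariance (ρ₁ ρ₂ v₁ v₂ R : ℝ) : ℝ := (ρ₁ + ρ₂ * R) * (v₁ + v₂ / R)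

section

variable {ρ₁ ρ₂ v₁ v₂ R : ℝ}

lemma nestedCostVariance_sub_one (hR : R ≠ 0) :
    nestedCostVariance ρ₁ ρ₂ v₁ v₂ R - nestedCostVariance ρ₁ ρ₂ v₁ v₂ 1
      = (R - 1) * (ρ₂ * v₁ - ρ₁ * v₂ / R) := by
  unfold nestedCostVariance
  field_simp
  ring

lemma nestedCostVariance_lt_one (h1 : 1 < R) (hlt : ρ₂ * v₁ * R < ρ₁ * v₂) :
    nestedCostVariance ρ₁ ρ₂ v₁ v₂ R < nestedCostVariance ρ₁ ρ₂ v₁ v₂ 1 := by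
  have hR₀ : 0 < R := one_pos.trans h1
  have hneg : ρ₂ * v₁ - ρ₁ * v₂ / R < 0 := by
    rw [sub_neg, lt_div_iff₀ hR₀]
    exact hlt
  rw [← sub_neg, nestedCostVariance_sub_one hR₀.ne']
  exact mul_neg_of_pos_of_neg (sub_pos.mpr h1) hneg

end

lemma Real.lt_of_pos_of_lt_sq_sqrt {x y : ℝ} (hx : 0 < x) (h : x < √y ^ 2) : x < y :=
  (lt_max_iff.mp (Real.sq_sqrt' ▸ h)).resolve_right hx.not_gt

theorem cor5_i_general (ρ₁ ρ₂ v₁ v₂ : ℝ)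
    (hρ₂ : 0 < ρ₂) (hv₁ : 0 < v₁)
    (V : ℝ → ℝ) (hV : ∀ R : ℝ, 0 < R → V R = (ρ₁ + ρ₂ * R) * (v₁ + v₂ / R))
    (Rstar : ℝ) (hRstar : Rstar = Real.sqrt (ρ₁ * v₂ / (ρ₂ * v₁))) :
    ∀ R : ℝ, 1 < R → R < Rstar ^ 2 → V R < V 1 := by
  intro R h1 h2
  have hR₀ : 0 < R := one_pos.trans h1
  have hRq : R < ρ₁ * v₂ / (ρ₂ * v₁) :=
    Real.lt_of_pos_of_lt_sq_sqrt hR₀ (hRstar ▸ h2)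
  rw [lt_div_iff₀ (mul_pos hρ₂ hv₁), mul_comm] at hRq
  rw [hV R hR₀, hV 1 one_pos]
  exact nestedCostVariance_lt_one h1 hRq

/-- **Corollary 5(i).** If `R* > 1`, then every `R` with `1 < R < (R*)²`
improves on simple Monte Carlo: `V(R) < V(1)`. -/
theorem cor5_i (ρ₁ ρ₂ v₁ v₂ : ℝ)
    (hρ₁ : 0 < ρ₁) (hρ₂ : 0 < ρ₂) (hv₁ : 0 < v₁) (hv₂ : 0 < v₂)
    (V : ℝ → ℝ) (hV : ∀ R : ℝ, 0 < R → V R = (ρ₁ + ρ₂ * R) * (v₁ + v₂ / R))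
    (Rstar : ℝ) (hRstar : Rstar = Real.sqrt (ρ₁ * v₂ / (ρ₂ * v₁)))
    (hRstar1 : 1 < Rstar) :
    ∀ R : ℝ, 1 < R → R < Rstar ^ 2 → V R < V 1 :=
  cor5_i_general ρ₁ ρ₂ v₁ v₂ hρ₂ hv₁ V hV Rstar hRstar
end

section
/- Let ρ₁, ρ₂, v₁, v₂ be strictly positive real numbers. Define V(R) = (ρ₁ + ρ₂·R)·(v₁ + v₂/R) for R > 0 and R* = √((ρ₁·v₂)/(ρ₂·v₁)), and suppose R* > 1. Let R# be the integer nearest to R* (rounding to the nearest integer). If R# > 1, then V(R#) < V(1). -/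
/-!
Clearing the denominator `R`, `V(1) - V(R) = (R - 1)(ρ₁v₂ - ρ₂v₁R) / R`, so `V(R) < V(1)` exactly
when `1 < R < R*²`. Rounding moves `R*` by at most `1/2`, and `R# ≥ 2` forces `R* ≥ 3/2`, where
`R* + 1/2 < R*²`.
-/

theorem mul_add_div_lt_add_mul_add {ρ₁ ρ₂ v₁ v₂ R : ℝ} (hR : 1 < R)
    (h : ρ₂ * v₁ * R < ρ₁ * v₂) :
    (ρ₁ + ρ₂ * R) * (v₁ + v₂ / R) < (ρ₁ + ρ₂) * (v₁ + v₂) := by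
  have hR₀ : 0 < R := by linarith
  have hgap : 0 < (R - 1) * (ρ₁ * v₂ - ρ₂ * v₁ * R) / R :=
    div_pos (mul_pos (by linarith) (by linarith)) hR₀
  have hdiff : (ρ₁ + ρ₂) * (v₁ + v₂) - (ρ₁ + ρ₂ * R) * (v₁ + v₂ / R)
      = (R - 1) * (ρ₁ * v₂ - ρ₂ * v₁ * R) / R := by
    field_simp
    ring
  linarith

theorem round_lt_sq_of_one_lt_round {x : ℝ} (h : 1 < round x) : (round x : ℝ) < x ^ 2 := by
  have hx : (3 / 2 : ℝ) ≤ x := by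
    have h₂ : (2 : ℤ) ≤ ⌊x + 1 / 2⌋ := by rw [← round_eq]; omega
    have := Int.le_floor.mp h₂
    push_cast at this
    linarith
  have hround : (round x : ℝ) ≤ x + 1 / 2 := by
    linarith [(abs_le.mp (abs_sub_round x)).1]
  nlinarith

theorem cor5_iii_general (ρ₁ ρ₂ v₁ v₂ : ℝ)
    (hρ₁ : 0 < ρ₁) (hρ₂ : 0 < ρ₂) (hv₁ : 0 < v₁) (hv₂ : 0 < v₂)
    (V : ℝ → ℝ) (hV : ∀ R : ℝ, 0 < R → V R = (ρ₁ + ρ₂ * R) * (v₁ + v₂ / R))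
    (Rstar : ℝ) (hRstar : Rstar = Real.sqrt (ρ₁ * v₂ / (ρ₂ * v₁)))
    (Rsharp : ℤ) (hRsharp : Rsharp = round Rstar) (hRsharp1 : 1 < Rsharp) :
    V (Rsharp : ℝ) < V 1 := by
  have hR₁ : (1 : ℝ) < Rsharp := by exact_mod_cast hRsharp1
  have hRstar_sq : Rstar ^ 2 = ρ₁ * v₂ / (ρ₂ * v₁) := by
    rw [hRstar, Real.sq_sqrt (by positivity)]
  have hlt : ρ₂ * v₁ * Rsharp < ρ₁ * v₂ := by
    have := round_lt_sq_of_one_lt_round (hRsharp ▸ hRsharp1)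
    rw [← hRsharp, hRstar_sq, lt_div_iff₀ (by positivity)] at this
    linarith
  rw [hV _ (by linarith), hV 1 one_pos, mul_one, div_one]
  exact mul_add_div_lt_add_mul_add hR₁ hlt

/-- **Corollary 5(iii).** If `R* > 1` and the integer `R#` nearest to `R*`
satisfies `R# > 1`, then `V(R#) < V(1)`. -/
theorem cor5_iii (ρ₁ ρ₂ v₁ v₂ : ℝ)
    (hρ₁ : 0 < ρ₁) (hρ₂ : 0 < ρ₂) (hv₁ : 0 < v₁) (hv₂ : 0 < v₂)
    (V : ℝ → ℝ) (hV : ∀ R : ℝ, 0 < R → V R = (ρ₁ + ρ₂ * R) * (v₁ + v₂ / R))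
    (Rstar : ℝ) (hRstar : Rstar = Real.sqrt (ρ₁ * v₂ / (ρ₂ * v₁)))
    (hRstar1 : 1 < Rstar)
    (Rsharp : ℤ) (hRsharp : Rsharp = round Rstar) (hRsharp1 : 1 < Rsharp) :
    V (Rsharp : ℝ) < V 1 :=
  cor5_iii_general ρ₁ ρ₂ v₁ v₂ hρ₁ hρ₂ hv₁ hv₂ V hV Rstar hRstar Rsharp hRsharp hRsharp1
end
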